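/- Let K ∈ ℝ, N > 1, δ > 0, and let λ > 0 satisfy (K−δ)λ² < (N−1)π². Let f : [0,1] → ℝ be continuous on [0,1], twice continuously differentiable on (0,1), and nonnegative, and assume that f''(s) + ((K−δ)λ²/N) f(s) ≥ 0 for every s ∈ (0,1). Then for every t ∈ [0,1], f(t) ≤ τ_{K−δ,N}^{(1−t)}(λ) f(0) + τ_{K−δ,N}^{(t)}(λ) f(1). -/

import Mathlib

/-- Distortion coefficient `σ_Λ^{(t)}(θ)`. -/
noncomputable def sigmaCoeff (Λ t θ : ℝ) : ℝ :=
  if Λ * θ ^ 2 = 0 then t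
  else if 0 < Λ * θ ^ 2 then
    Real.sin (t * (θ * Real.sqrt Λ)) / Real.sin (θ * Real.sqrt Λ)
  else
    Real.sinh (t * (θ * Real.sqrt (-Λ))) / Real.sinh (θ * Real.sqrt (-Λ))

/-- Distortion coefficient `τ_{K,N}^{(t)}(θ) = t^{1/N} (σ_{K/(N-1)}^{(t)}(θ))^{1-1/N}`. -/
noncomputable def tauCoeff (K N t θ : ℝ) : ℝ :=
  t ^ (1 / N) * (sigmaCoeff (K / (N - 1)) t θ) ^ (1 - 1 / N)

/-! Write `Λ = (K - δ)λ²/N`. Because `Λ < π²`, the operator `u ↦ u'' + Λu` obeys a maximum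
principle on `[0, 1]`: it has a solution `φ > 0` there, and the Wronskian `u'φ - uφ'` of a
subsolution `u` is nondecreasing, so a subsolution that is `≤ 0` at both endpoints is `≤ 0`
throughout. Comparing `f` with the solution `σ_Λ^{(1-t)} f(0) + σ_Λ^{(t)} f(1)` bounds `f`
with `σ` in place of `τ`. Finally `σ_Λ^{(t)} ≤ τ^{(t)}`: with `μ = 1 - 1/N` and
`κ = (K - δ)λ²/(N - 1)`, so that `Λ = μκ`, the geometric mean `t^{1-μ} (σ_κ^{(t)})^μ` of
solutions for `0` and `κ` is a supersolution for `μκ` with the boundary values of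
`σ_{μκ}^{(t)}`. -/

open Real Set

def SolvesOscillator (Λ : ℝ) (u : ℝ → ℝ) : Prop :=
  ∃ u' : ℝ → ℝ, (∀ t, HasDerivAt u (u' t) t) ∧ ∀ t, HasDerivAt u' (-(Λ * u t)) t

namespace SolvesOscillator

variable {Λ : ℝ} {u v : ℝ → ℝ}

theorem continuous (hu : SolvesOscillator Λ u) : Continuous u := by
  obtain ⟨u', hu', -⟩ := hu
  exact continuous_iff_continuousAt.2 fun t => (hu' t).continuousAt

theorem add (hu : SolvesOscillator Λ u) (hv : SolvesOscillator Λ v) :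
    SolvesOscillator Λ (fun t => u t + v t) := by
  obtain ⟨u', hu', hu''⟩ := hu
  obtain ⟨v', hv', hv''⟩ := hv
  exact ⟨fun t => u' t + v' t, fun t => (hu' t).add (hv' t),
    fun t => ((hu'' t).add (hv'' t)).congr_deriv (by ring)⟩

theorem mul_const (hu : SolvesOscillator Λ u) (c : ℝ) :
    SolvesOscillator Λ (fun t => u t * c) := by
  obtain ⟨u', hu', hu''⟩ := hu
  exact ⟨fun t => u' t * c, fun t => (hu' t).mul_const c,
    fun t => ((hu'' t).mul_const c).congr_deriv (by ring)⟩

theorem div_const (hu : SolvesOscillator Λ u) (c : ℝ) :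
    SolvesOscillator Λ (fun t => u t / c) := by
  simpa only [div_eq_mul_inv] using hu.mul_const c⁻¹

theorem comp_one_sub (hu : SolvesOscillator Λ u) :
    SolvesOscillator Λ (fun t => u (1 - t)) := by
  obtain ⟨u', hu', hu''⟩ := hu
  have hr : ∀ t : ℝ, HasDerivAt (fun t : ℝ => 1 - t) (-1) t := fun t =>
    (hasDerivAt_id t).const_sub 1
  exact ⟨fun t => -u' (1 - t), fun t => ((hu' (1 - t)).comp t (hr t)).congr_deriv (by ring),
    fun t => (((hu'' (1 - t)).comp t (hr t)).neg).congr_deriv (by ring)⟩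

end SolvesOscillator

theorem solvesOscillator_id : SolvesOscillator 0 id :=
  ⟨fun _ => 1, hasDerivAt_id, fun t => (hasDerivAt_const t 1).congr_deriv (by ring)⟩

theorem solvesOscillator_sin_mul (ω : ℝ) :
    SolvesOscillator (ω ^ 2) (fun t => sin (t * ω)) := by
  have hl : ∀ t : ℝ, HasDerivAt (fun t : ℝ => t * ω) ω t := fun t => by
    simpa using (hasDerivAt_id t).mul_const ω
  exact ⟨fun t => cos (t * ω) * ω, fun t => (hasDerivAt_sin _).comp t (hl t),
    fun t => (((hasDerivAt_cos _).comp t (hl t)).mul_const ω).congr_deriv (by ring)⟩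

theorem solvesOscillator_sinh_mul (ν : ℝ) :
    SolvesOscillator (-ν ^ 2) (fun t => sinh (t * ν)) := by
  have hl : ∀ t : ℝ, HasDerivAt (fun t : ℝ => t * ν) ν t := fun t => by
    simpa using (hasDerivAt_id t).mul_const ν
  exact ⟨fun t => cosh (t * ν) * ν, fun t => (hasDerivAt_sinh _).comp t (hl t),
    fun t => (((hasDerivAt_cosh _).comp t (hl t)).mul_const ν).congr_deriv (by ring)⟩

theorem sigmaCoeff_one_eq (c t : ℝ) : sigmaCoeff c t 1 =
    if c = 0 then t else if 0 < c then sin (t * √c) / sin √c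
    else sinh (t * √(-c)) / sinh √(-c) := by
  simp [sigmaCoeff]

theorem sigmaCoeff_eq_sigmaCoeff_mul_sq (c t θ : ℝ) :
    sigmaCoeff c t θ = sigmaCoeff (c * θ ^ 2) t 1 := by
  have even_ratio : ∀ g : ℝ → ℝ, (∀ x, g (-x) = -g x) → ∀ x,
      g (t * (θ * x)) / g (θ * x) = g (t * (x * |θ|)) / g (x * |θ|) := by
    intro g hg x
    rcases abs_choice θ with h | h <;> rw [h]
    · ring_nf
    · rw [show x * -θ = -(θ * x) by ring, mul_neg, hg, hg, neg_div_neg_eq]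
  simp only [sigmaCoeff, one_pow, mul_one, one_mul]
  split_ifs with h0 hpos
  · rfl
  · have hc : 0 < c := pos_of_mul_pos_left hpos (sq_nonneg θ)
    rw [sqrt_mul hc.le, sqrt_sq_eq_abs, even_ratio sin sin_neg]
  · rw [← neg_mul, sqrt_mul' _ (sq_nonneg θ), sqrt_sq_eq_abs, even_ratio sinh sinh_neg]

theorem sigmaCoeff_zero_one (c : ℝ) : sigmaCoeff c 0 1 = 0 := by
  rw [sigmaCoeff_one_eq]
  split_ifs <;> simp

theorem sqrt_lt_pi_of_lt_sq {c : ℝ} (hc : c < π ^ 2) : √c < π :=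
  (sqrt_lt' pi_pos).2 hc

theorem sigmaCoeff_pos {c t : ℝ} (hc : c < π ^ 2) (ht : t ∈ Ioc (0 : ℝ) 1) :
    0 < sigmaCoeff c t 1 := by
  rw [sigmaCoeff_one_eq]
  split_ifs with h0 hpos
  · exact ht.1
  · have hω : 0 < √c := sqrt_pos.2 hpos
    have hωπ := sqrt_lt_pi_of_lt_sq hc
    refine div_pos (sin_pos_of_pos_of_lt_pi (mul_pos ht.1 hω) ?_)
      (sin_pos_of_pos_of_lt_pi hω hωπ)
    nlinarith [ht.2]
  · have hν : 0 < √(-c) := sqrt_pos.2 (neg_pos.2 (lt_of_le_of_ne (not_lt.1 hpos) h0))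
    exact div_pos (sinh_pos_iff.2 (mul_pos ht.1 hν)) (sinh_pos_iff.2 hν)

theorem sigmaCoeff_one_one {c : ℝ} (hc : c < π ^ 2) : sigmaCoeff c 1 1 = 1 := by
  rw [sigmaCoeff_one_eq]
  split_ifs with h0 hpos
  · rfl
  · rw [one_mul, div_self (sin_pos_of_pos_of_lt_pi (sqrt_pos.2 hpos) (sqrt_lt_pi_of_lt_sq hc)).ne']
  · rw [one_mul, div_self (sinh_pos_iff.2 (sqrt_pos.2 _)).ne']
    exact neg_pos.2 (lt_of_le_of_ne (not_lt.1 hpos) h0)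

theorem sigmaCoeff_nonneg {c t : ℝ} (hc : c < π ^ 2) (ht : t ∈ Icc (0 : ℝ) 1) :
    0 ≤ sigmaCoeff c t 1 := by
  rcases ht.1.eq_or_lt with rfl | h0
  · rw [sigmaCoeff_zero_one]
  · exact (sigmaCoeff_pos hc ⟨h0, ht.2⟩).le

theorem solvesOscillator_sigmaCoeff (c : ℝ) :
    SolvesOscillator c (fun t => sigmaCoeff c t 1) := by
  simp only [sigmaCoeff_one_eq]
  split_ifs with h0 hpos
  · subst h0; exact solvesOscillator_id
  · simpa [sq_sqrt hpos.le] using (solvesOscillator_sin_mul √c).div_const (sin √c)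
  · have : -√(-c) ^ 2 = c := by
      rw [sq_sqrt (neg_nonneg.2 (not_lt.1 hpos)), neg_neg]
    simpa [this] using (solvesOscillator_sinh_mul √(-c)).div_const (sinh √(-c))

theorem exists_pos_solvesOscillator {Λ : ℝ} (hΛ : Λ < π ^ 2) :
    ∃ φ, SolvesOscillator Λ φ ∧ ∀ t ∈ Icc (0 : ℝ) 1, 0 < φ t := by
  have hσ := solvesOscillator_sigmaCoeff Λ
  refine ⟨fun t => sigmaCoeff Λ t 1 + sigmaCoeff Λ (1 - t) 1, hσ.add hσ.comp_one_sub,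
    fun t ht => ?_⟩
  have h1t : 1 - t ∈ Icc (0 : ℝ) 1 := ⟨by linarith [ht.2], by linarith [ht.1]⟩
  rcases ht.1.eq_or_lt with rfl | ht0
  · exact add_pos_of_nonneg_of_pos (sigmaCoeff_nonneg hΛ ht) (sigmaCoeff_pos hΛ (by simp))
  · exact add_pos_of_pos_of_nonneg (sigmaCoeff_pos hΛ ⟨ht0, ht.2⟩) (sigmaCoeff_nonneg hΛ h1t)

theorem monotoneOn_wronskian {Λ : ℝ} {u u' u'' φ φ' : ℝ → ℝ}
    (hφ : ∀ t, HasDerivAt φ (φ' t) t) (hφ' : ∀ t, HasDerivAt φ' (-(Λ * φ t)) t)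
    (hφ0 : ∀ s ∈ Ioo (0 : ℝ) 1, 0 ≤ φ s)
    (hu : ∀ s ∈ Ioo (0 : ℝ) 1, HasDerivAt u (u' s) s)
    (hu' : ∀ s ∈ Ioo (0 : ℝ) 1, HasDerivAt u' (u'' s) s)
    (hode : ∀ s ∈ Ioo (0 : ℝ) 1, 0 ≤ u'' s + Λ * u s) :
    MonotoneOn (fun t => u' t * φ t - u t * φ' t) (Ioo 0 1) := by
  have hW : ∀ s ∈ Ioo (0 : ℝ) 1,
      HasDerivAt (fun t => u' t * φ t - u t * φ' t) (φ s * (u'' s + Λ * u s)) s := fun s hs =>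
    (((hu' s hs).mul (hφ s)).sub ((hu s hs).mul (hφ' s))).congr_deriv (by ring)
  refine monotoneOn_of_hasDerivWithinAt_nonneg (f' := fun s => φ s * (u'' s + Λ * u s))
    (convex_Ioo 0 1)
    (fun s hs => (hW s hs).continuousAt.continuousWithinAt) (fun s hs => ?_)
    (fun s hs => ?_) <;> rw [interior_Ioo] at hs
  · exact (hW s hs).hasDerivWithinAt
  · exact mul_nonneg (hφ0 s hs) (hode s hs)

theorem exists_mem_Ioo_hasDerivAt_pos {q q' : ℝ → ℝ} {a b : ℝ} (hab : a < b)
    (hq : ContinuousOn q (Icc a b)) (hq' : ∀ s ∈ Ioo a b, HasDerivAt q (q' s) s)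
    (hlt : q a < q b) : ∃ ξ ∈ Ioo a b, 0 < q' ξ := by
  obtain ⟨ξ, hξ, hslope⟩ := exists_hasDerivAt_eq_slope q q' hab hq hq'
  exact ⟨ξ, hξ, hslope ▸ div_pos (sub_pos.2 hlt) (sub_pos.2 hab)⟩

theorem nonpos_of_deriv2_add_mul_nonneg {Λ : ℝ} (hΛ : Λ < π ^ 2) {u u' u'' : ℝ → ℝ}
    (hu : ContinuousOn u (Icc 0 1))
    (hu' : ∀ s ∈ Ioo (0 : ℝ) 1, HasDerivAt u (u' s) s)
    (hu'' : ∀ s ∈ Ioo (0 : ℝ) 1, HasDerivAt u' (u'' s) s)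
    (hode : ∀ s ∈ Ioo (0 : ℝ) 1, 0 ≤ u'' s + Λ * u s) (h0 : u 0 ≤ 0) (h1 : u 1 ≤ 0) :
    ∀ t ∈ Icc (0 : ℝ) 1, u t ≤ 0 := by
  obtain ⟨φ, ⟨φ', hφ, hφ'⟩, hφ0⟩ := exists_pos_solvesOscillator hΛ
  by_contra! ⟨t₀, ht₀, hut₀⟩
  have ht₀' : t₀ ∈ Ioo (0 : ℝ) 1 :=
    ⟨ht₀.1.lt_of_ne (by rintro rfl; linarith), ht₀.2.lt_of_ne (by rintro rfl; linarith)⟩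
  set W := fun t => u' t * φ t - u t * φ' t
  have hmono := monotoneOn_wronskian hφ hφ' (fun s hs => (hφ0 s (Ioo_subset_Icc_self hs)).le)
    hu' hu'' hode
  -- `W / φ²` is the derivative of `u / φ`, which rises on `[0, t₀]` and falls on `[t₀, 1]`.
  have hq : ∀ s ∈ Ioo (0 : ℝ) 1, HasDerivAt (fun t => u t / φ t) (W s / φ s ^ 2) s :=
    fun s hs => (hu' s hs).div (hφ s) (hφ0 s (Ioo_subset_Icc_self hs)).ne'
  have hqc : ContinuousOn (fun t => u t / φ t) (Icc 0 1) :=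
    hu.div (continuous_iff_continuousAt.2 fun t => (hφ t).continuousAt).continuousOn
      fun t ht => (hφ0 t ht).ne'
  have hφ2 : ∀ s ∈ Ioo (0 : ℝ) 1, 0 < φ s ^ 2 := fun s hs =>
    pow_pos (hφ0 s (Ioo_subset_Icc_self hs)) 2
  have hq0 : u 0 / φ 0 ≤ 0 :=
    div_nonpos_of_nonpos_of_nonneg h0 (hφ0 0 (left_mem_Icc.2 zero_le_one)).le
  have hq1 : u 1 / φ 1 ≤ 0 :=
    div_nonpos_of_nonpos_of_nonneg h1 (hφ0 1 (right_mem_Icc.2 zero_le_one)).le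
  have hqt₀ : 0 < u t₀ / φ t₀ := div_pos hut₀ (hφ0 t₀ ht₀)
  obtain ⟨ξ, hξ, hWξ⟩ := exists_mem_Ioo_hasDerivAt_pos ht₀'.1
    (hqc.mono (Icc_subset_Icc le_rfl ht₀.2)) (fun s hs => hq s ⟨hs.1, hs.2.trans ht₀'.2⟩)
    (by linarith)
  obtain ⟨η, hη, hWη⟩ := exists_mem_Ioo_hasDerivAt_pos ht₀'.2
    (hqc.mono (Icc_subset_Icc ht₀.1 le_rfl)).neg
    (fun s hs => (hq s ⟨ht₀'.1.trans hs.1, hs.2⟩).neg) (by simp only [Pi.neg_apply]; linarith)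
  have hξ' : ξ ∈ Ioo (0 : ℝ) 1 := ⟨hξ.1, hξ.2.trans ht₀'.2⟩
  have hη' : η ∈ Ioo (0 : ℝ) 1 := ⟨ht₀'.1.trans hη.1, hη.2⟩
  rw [← neg_div] at hWη
  have hWξ_pos := (div_pos_iff_of_pos_right (hφ2 ξ hξ')).1 hWξ
  have hWη_neg := (div_pos_iff_of_pos_right (hφ2 η hη')).1 hWη
  linarith [hmono hξ' hη' (hξ.2.trans hη.1).le]

theorem le_sigmaCoeff_interpolation {Λ : ℝ} (hΛ : Λ < π ^ 2) {f f' f'' : ℝ → ℝ}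
    (hf : ContinuousOn f (Icc 0 1))
    (hf' : ∀ s ∈ Ioo (0 : ℝ) 1, HasDerivAt f (f' s) s)
    (hf'' : ∀ s ∈ Ioo (0 : ℝ) 1, HasDerivAt f' (f'' s) s)
    (hode : ∀ s ∈ Ioo (0 : ℝ) 1, 0 ≤ f'' s + Λ * f s) :
    ∀ t ∈ Icc (0 : ℝ) 1, f t ≤ sigmaCoeff Λ (1 - t) 1 * f 0 + sigmaCoeff Λ t 1 * f 1 := by
  set g := fun t => sigmaCoeff Λ (1 - t) 1 * f 0 + sigmaCoeff Λ t 1 * f 1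
  have hσ := solvesOscillator_sigmaCoeff Λ
  have hg : SolvesOscillator Λ g := (hσ.comp_one_sub.mul_const _).add (hσ.mul_const _)
  obtain ⟨g', hg', hg''⟩ := id hg
  have hu := nonpos_of_deriv2_add_mul_nonneg hΛ (u := fun t => f t - g t)
    (hf.sub hg.continuous.continuousOn) (fun s hs => (hf' s hs).sub (hg' s))
    (fun s hs => (hf'' s hs).sub (hg'' s)) (fun s hs => by linarith [hode s hs])
    (by simp [g, sigmaCoeff_zero_one, sigmaCoeff_one_one hΛ])
    (by simp [g, sigmaCoeff_zero_one, sigmaCoeff_one_one hΛ])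
  exact fun t ht => sub_nonpos.1 (hu t ht)

theorem exists_deriv2_rpow_mul_rpow_le {U : Set ℝ} {a a' a'' b b' b'' : ℝ → ℝ}
    {α β p q : ℝ}
    (hp : 0 ≤ p) (hq : 0 ≤ q) (hpq : p + q = 1)
    (ha : ∀ s ∈ U, HasDerivAt a (a' s) s) (ha' : ∀ s ∈ U, HasDerivAt a' (a'' s) s)
    (hb : ∀ s ∈ U, HasDerivAt b (b' s) s) (hb' : ∀ s ∈ U, HasDerivAt b' (b'' s) s)
    (ha0 : ∀ s ∈ U, 0 < a s) (hb0 : ∀ s ∈ U, 0 < b s)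
    (haα : ∀ s ∈ U, a'' s + α * a s ≤ 0) (hbβ : ∀ s ∈ U, b'' s + β * b s ≤ 0) :
    ∃ R' R'' : ℝ → ℝ, ∀ s ∈ U, HasDerivAt (fun t => a t ^ p * b t ^ q) (R' s) s ∧
      HasDerivAt R' (R'' s) s ∧ R'' s + (p * α + q * β) * (a s ^ p * b s ^ q) ≤ 0 := by
  obtain rfl : q = 1 - p := by linarith
  refine ⟨fun t => a' t * p * a t ^ (p - 1) * b t ^ (1 - p)
      + a t ^ p * (b' t * (1 - p) * b t ^ (1 - p - 1)),
    fun t => a t ^ p * b t ^ (1 - p) * (p * (a'' t / a t) + (1 - p) * (b'' t / b t)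
      - p * (1 - p) * (a' t / a t - b' t / b t) ^ 2), fun s hs => ⟨?_, ?_, ?_⟩⟩
  · exact ((ha s hs).rpow_const (Or.inl (ha0 s hs).ne')).mul
      ((hb s hs).rpow_const (Or.inl (hb0 s hs).ne'))
  · have hA := ha0 s hs
    have hB := hb0 s hs
    refine ((((ha' s hs).mul_const p).mul ((ha s hs).rpow_const (Or.inl hA.ne'))).mul
      ((hb s hs).rpow_const (Or.inl hB.ne'))).add
      (((ha s hs).rpow_const (Or.inl hA.ne')).mul (((hb' s hs).mul_const (1 - p)).mul
      ((hb s hs).rpow_const (Or.inl hB.ne')))) |>.congr_deriv ?_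
    simp only [Pi.mul_apply, rpow_sub_one hA.ne', rpow_sub_one hB.ne']
    field_simp
    ring
  · have hA := ha0 s hs
    have hB := hb0 s hs
    have h1 : a'' s / a s ≤ -α := (div_le_iff₀ hA).2 (by linarith [haα s hs])
    have h2 : b'' s / b s ≤ -β := (div_le_iff₀ hB).2 (by linarith [hbβ s hs])
    have hdefect : p * (a'' s / a s) + (1 - p) * (b'' s / b s)
        - p * (1 - p) * (a' s / a s - b' s / b s) ^ 2 ≤ -(p * α + (1 - p) * β) := by
      nlinarith [mul_le_mul_of_nonneg_left h1 hp, mul_le_mul_of_nonneg_left h2 hq,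
        mul_nonneg (mul_nonneg hp hq) (sq_nonneg (a' s / a s - b' s / b s))]
    nlinarith [mul_le_mul_of_nonneg_left hdefect (by positivity : 0 ≤ a s ^ p * b s ^ (1 - p))]

theorem sigmaCoeff_mul_le_rpow_mul_rpow {κ μ : ℝ} (hκ : κ < π ^ 2) (hμ0 : 0 < μ)
    (hμ1 : μ < 1) :
    ∀ t ∈ Icc (0 : ℝ) 1,
      sigmaCoeff (μ * κ) t 1 ≤ t ^ (1 - μ) * sigmaCoeff κ t 1 ^ μ := by
  have hμκ : μ * κ < π ^ 2 := by
    rcases le_or_gt κ 0 with h | h <;> nlinarith [pi_pos]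
  have hS := solvesOscillator_sigmaCoeff κ
  obtain ⟨S', hS', hS''⟩ := id hS
  obtain ⟨L', hL', hL''⟩ := solvesOscillator_sigmaCoeff (μ * κ)
  -- `t ↦ t` solves `u'' = 0` and `σ_κ` solves `u'' = -κu`, so their geometric mean is a
  -- supersolution for `(1 - μ) * 0 + μ * κ`.
  obtain ⟨R', R'', hR⟩ := exists_deriv2_rpow_mul_rpow_le (U := Ioo 0 1) (a := id) (a'' := 0)
    (α := 0) (β := κ) (sub_nonneg.2 hμ1.le) hμ0.le (sub_add_cancel 1 μ)
    (fun s _ => hasDerivAt_id s) (fun s _ => hasDerivAt_const s 1) (fun s _ => hS' s)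
    (fun s _ => hS'' s) (fun s hs => hs.1) (fun s hs => sigmaCoeff_pos hκ ⟨hs.1, hs.2.le⟩)
    (fun s _ => by simp) (fun s _ => by simp)
  have hRc : ContinuousOn (fun t => t ^ (1 - μ) * sigmaCoeff κ t 1 ^ μ) (Icc 0 1) :=
    (continuousOn_id.rpow_const fun _ _ => Or.inr (by linarith)).mul
      (hS.continuous.continuousOn.rpow_const fun _ _ => Or.inr hμ0.le)
  have hu := nonpos_of_deriv2_add_mul_nonneg hμκ
    (u := fun t => sigmaCoeff (μ * κ) t 1 - t ^ (1 - μ) * sigmaCoeff κ t 1 ^ μ)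
    ((solvesOscillator_sigmaCoeff _).continuous.continuousOn.sub hRc)
    (fun s hs => (hL' s).sub (hR s hs).1) (fun s hs => (hL'' s).sub (hR s hs).2.1)
    (fun s hs => by
      have h := (hR s hs).2.2
      simp only [id, mul_zero, zero_add] at h
      beta_reduce
      linarith)
    (by simp [sigmaCoeff_zero_one, zero_rpow (sub_pos.2 hμ1).ne'])
    (by simp [sigmaCoeff_one_one hμκ, sigmaCoeff_one_one hκ])
  exact fun t ht => sub_nonpos.1 (hu t ht)

theorem stmt_7_general (K N δ lam : ℝ) (hN : 1 < N)
    (hfin : (K - δ) * lam ^ 2 < (N - 1) * Real.pi ^ 2)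
    (f f' f'' : ℝ → ℝ)
    (hf : ContinuousOn f (Set.Icc 0 1))
    (hf' : ∀ s ∈ Set.Ioo (0 : ℝ) 1, HasDerivAt f (f' s) s)
    (hf'' : ∀ s ∈ Set.Ioo (0 : ℝ) 1, HasDerivAt f' (f'' s) s)
    (hfnonneg : ∀ s ∈ Set.Icc (0 : ℝ) 1, 0 ≤ f s)
    (hode : ∀ s ∈ Set.Ioo (0 : ℝ) 1, 0 ≤ f'' s + ((K - δ) * lam ^ 2 / N) * f s) :
    ∀ t ∈ Set.Icc (0 : ℝ) 1,
      f t ≤ tauCoeff (K - δ) N (1 - t) lam * f 0 + tauCoeff (K - δ) N t lam * f 1 := by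
  have hN0 : 0 < N := by linarith
  have hN1 : 0 < N - 1 := by linarith
  set κ := (K - δ) / (N - 1) * lam ^ 2
  set μ := 1 - 1 / N
  have hκ : κ < π ^ 2 := by
    rw [show κ = (K - δ) * lam ^ 2 / (N - 1) by ring, div_lt_iff₀ hN1]; linarith
  have hΛ : (K - δ) * lam ^ 2 / N = μ * κ := by
    simp only [μ, κ]; field_simp [hN1.ne']
  have hΛπ : μ * κ < π ^ 2 := by
    rw [← hΛ, div_lt_iff₀ hN0]; nlinarith
  have hστ : ∀ r ∈ Icc (0 : ℝ) 1, sigmaCoeff (μ * κ) r 1 ≤ tauCoeff (K - δ) N r lam :=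
    fun r hr => by
      rw [tauCoeff, sigmaCoeff_eq_sigmaCoeff_mul_sq _ r lam]
      simpa only [μ, sub_sub_cancel] using sigmaCoeff_mul_le_rpow_mul_rpow hκ
        (sub_pos.2 ((div_lt_one hN0).2 hN)) (sub_lt_self 1 (by positivity)) r hr
  rw [hΛ] at hode
  intro t ht
  calc f t ≤ sigmaCoeff (μ * κ) (1 - t) 1 * f 0 + sigmaCoeff (μ * κ) t 1 * f 1 :=
        le_sigmaCoeff_interpolation hΛπ hf hf' hf'' hode t ht
    _ ≤ _ := add_le_add
        (mul_le_mul_of_nonneg_right (hστ _ ⟨by linarith [ht.2], by linarith [ht.1]⟩)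
          (hfnonneg 0 (left_mem_Icc.2 zero_le_one)))
        (mul_le_mul_of_nonneg_right (hστ t ht) (hfnonneg 1 (right_mem_Icc.2 zero_le_one)))

/-- `τ`-concavity from the differential inequality: if
`f'' + ((K-δ)λ²/N) f ≥ 0` on `(0,1)`, then
`f(t) ≤ τ_{K-δ,N}^{(1-t)}(λ) f(0) + τ_{K-δ,N}^{(t)}(λ) f(1)`. -/
theorem stmt_7 (K N δ lam : ℝ) (hN : 1 < N) (hδ : 0 < δ) (hlam : 0 < lam)
    (hfin : (K - δ) * lam ^ 2 < (N - 1) * Real.pi ^ 2)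
    (f f' f'' : ℝ → ℝ)
    (hf : ContinuousOn f (Set.Icc 0 1))
    (hf' : ∀ s ∈ Set.Ioo (0 : ℝ) 1, HasDerivAt f (f' s) s)
    (hf'' : ∀ s ∈ Set.Ioo (0 : ℝ) 1, HasDerivAt f' (f'' s) s)
    (hf''cont : ContinuousOn f'' (Set.Ioo 0 1))
    (hfnonneg : ∀ s ∈ Set.Icc (0 : ℝ) 1, 0 ≤ f s)
    (hode : ∀ s ∈ Set.Ioo (0 : ℝ) 1, 0 ≤ f'' s + ((K - δ) * lam ^ 2 / N) * f s) :
    ∀ t ∈ Set.Icc (0 : ℝ) 1,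
      f t ≤ tauCoeff (K - δ) N (1 - t) lam * f 0 + tauCoeff (K - δ) N t lam * f 1 :=
  stmt_7_general K N δ lam hN hfin f f' f'' hf hf' hf'' hfnonneg hode
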